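/- Let ℜ = (S,(𝒦,𝒢),(X,ℬ),(ℱ,𝒯)) be a Riesz system, Z a uniform commutative monoid, and ℓ : ℱ → Z a Riesz integral over ℜ. Then for all κ∈𝒦, B∈ℬ and x∈B, the family {ℓ(ℱ*(x,κ,β,B)) : β∈𝒢, κ⊆β} is a Cauchy filter base in Z. -/

import Mathlib

open Filter Set Topology
open scoped Pointwise

universe u v w

/-- A member of `unif M`: a closed, translation-invariant, symmetric entourage of the
uniform commutative monoid `M`. -/
def IsUnifEnt (M : Type*) [AddCommMonoid M] [UniformSpace M] (W : Set (M × M)) : Prop :=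
  W ∈ uniformity M ∧ IsClosed W ∧
    (∀ p ∈ W, ∀ t : M, (p.1 + t, p.2 + t) ∈ W) ∧ ∀ p ∈ W, (p.2, p.1) ∈ W

/-- `f` is supported by `α` (written `f ≺ α`): `f` vanishes off some `κ ∈ 𝒦` with `κ ⊆ α`. -/
def SupportedBy {S : Type u} {X : Type v} [Zero X]
    (𝒦 : Set (Set S)) (f : S → X) (α : Set S) : Prop :=
  ∃ κ ∈ 𝒦, κ ⊆ α ∧ ∀ s ∉ κ, f s = 0

/-- `f` equals `x` over `α`: `f` is identically `x` on some `γ ∈ 𝒢` containing `α`. -/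
def EqualsOver {S : Type u} {X : Type v}
    (𝒢 : Set (Set S)) (f : S → X) (x : X) (α : Set S) : Prop :=
  ∃ γ ∈ 𝒢, α ⊆ γ ∧ ∀ s ∈ γ, f s = x

/-- `ℱ_B`: members of `ℱ` with range contained in `B`. -/
def FB {S : Type u} {X : Type v} (ℱ : Set (S → X)) (B : Set X) : Set (S → X) :=
  {f | f ∈ ℱ ∧ Set.range f ⊆ B}

/-- the `ℬ`-hull of `x`: intersection of all members of `ℬ` containing `x`. -/
def BHull {X : Type v} (ℬ : Set (Set X)) (x : X) : Set X :=
  ⋂₀ {B | B ∈ ℬ ∧ x ∈ B}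

/-- the `ℬ`-hull of a subset `A` of `X`. -/
def BHullS {X : Type v} (ℬ : Set (Set X)) (A : Set X) : Set X :=
  ⋂₀ {B | B ∈ ℬ ∧ A ⊆ B}

/-- A field of subsets of `S`. -/
def IsSetField {S : Type u} (ℰ : Set (Set S)) : Prop :=
  Set.univ ∈ ℰ ∧ (∀ A ∈ ℰ, Aᶜ ∈ ℰ) ∧ ∀ A ∈ ℰ, ∀ B ∈ ℰ, A ∪ B ∈ ℰ

/-- `ℰ`: the smallest field of subsets of `S` containing `𝒦 ∪ 𝒢`. -/
def genField {S : Type u} (𝒦 𝒢 : Set (Set S)) : Set (Set S) :=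
  ⋂₀ {ℰ | 𝒦 ∪ 𝒢 ⊆ ℰ ∧ IsSetField ℰ}

/-- A Riesz system `(S,(𝒦,𝒢),(X,ℬ),(ℱ,𝒯))` (Assumptions 2.3 of the paper). -/
structure RieszSystem {S : Type u} {X : Type v} [AddCommMonoid X] [UniformSpace X]
    (𝒦 𝒢 : Set (Set S)) (ℬ : Set (Set X)) (ℱ : Set (S → X))
    (𝒯 : Filter ((S → X) × (S → X))) : Prop where
  K_empty : ∅ ∈ 𝒦
  K_union : ∀ κ₁ ∈ 𝒦, ∀ κ₂ ∈ 𝒦, κ₁ ∪ κ₂ ∈ 𝒦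
  G_empty : ∅ ∈ 𝒢
  G_union : ∀ γ₁ ∈ 𝒢, ∀ γ₂ ∈ 𝒢, γ₁ ∪ γ₂ ∈ 𝒢
  G_inter : ∀ γ₁ ∈ 𝒢, ∀ γ₂ ∈ 𝒢, γ₁ ∩ γ₂ ∈ 𝒢
  KG_diff : ∀ κ ∈ 𝒦, ∀ γ ∈ 𝒢, κ \ γ ∈ 𝒦 ∧ γ \ κ ∈ 𝒢
  KG_interpose : ∀ κ ∈ 𝒦, ∀ γ ∈ 𝒢, κ ⊆ γ →
      ∃ γ' ∈ 𝒢, ∃ κ' ∈ 𝒦, κ ⊆ γ' ∧ γ' ⊆ κ' ∧ κ' ⊆ γ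
  X_add : UniformContinuous fun p : X × X => p.1 + p.2
  B_nonempty : ℬ.Nonempty
  B_inter : ∀ 𝒞 ⊆ ℬ, 𝒞.Nonempty → ⋂₀ 𝒞 ∈ ℬ
  B_zero : ∀ B ∈ ℬ, (0 : X) ∈ B
  B_add : ∀ B ∈ ℬ, ∀ B' ∈ ℬ, ∃ C ∈ ℬ, B + B' ⊆ C
  B_cover : ∀ x : X, ∃ B ∈ ℬ, x ∈ B
  F_zero : (0 : S → X) ∈ ℱ
  F_add : ∀ f ∈ ℱ, ∀ g ∈ ℱ, f + g ∈ ℱ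
  T_refl : ∀ T ∈ 𝒯, ∀ f ∈ ℱ, (f, f) ∈ T
  T_symm : ∀ T ∈ 𝒯, ∃ V ∈ 𝒯, ∀ f g : S → X, (f, g) ∈ V → (g, f) ∈ T
  T_comp : ∀ T ∈ 𝒯, ∃ V ∈ 𝒯, ∀ f g h : S → X, (f, g) ∈ V → (g, h) ∈ V → (f, h) ∈ T
  T_add : ∀ T ∈ 𝒯, ∃ V ∈ 𝒯, ∀ f f' g g' : S → X,
      (f, f') ∈ V → (g, g') ∈ V → (f + g, f' + g') ∈ T
  F_range : ∀ f ∈ ℱ, ∃ B ∈ ℬ, Set.range f ⊆ B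
  F_partble : ∀ f ∈ ℱ, ∀ W ∈ uniformity X, ∃ G : Finset (Set S), ↑G ⊆ 𝒢 ∧
      (⋃ γ ∈ G, γ) = Set.univ ∧ ∀ γ ∈ G, ∀ s ∈ γ, ∀ t ∈ γ, (f s, f t) ∈ W
  F_urysohn : ∀ κ ∈ 𝒦, ∀ γ ∈ 𝒢, κ ⊆ γ → ∀ x : X, ∃ f ∈ ℱ,
      Set.range f ⊆ BHull ℬ x ∧ SupportedBy 𝒦 f γ ∧ EqualsOver 𝒢 f x κ
  F_ext : ∀ B ∈ ℬ, ∀ T ∈ 𝒯, ∃ U ∈ uniformity X, ∀ κ ∈ 𝒦, ∀ γ ∈ 𝒢, κ ⊆ γ →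
      ∀ f ∈ FB ℱ B, ∀ g ∈ FB ℱ B, SupportedBy 𝒦 f γ → SupportedBy 𝒦 g γ →
      (∃ ω ∈ 𝒢, κ ⊆ ω ∧ ω ⊆ γ ∧ ∀ s ∈ ω, (f s, g s) ∈ U) →
      ∃ p ∈ FB ℱ B, ∃ q ∈ FB ℱ B, SupportedBy 𝒦 p (γ \ κ) ∧
        SupportedBy 𝒦 q (γ \ κ) ∧ (f + p, g + q) ∈ T
  F_partunity : ∀ B ∈ ℬ, ∀ G : Finset (Set S), ↑G ⊆ 𝒢 → ∀ κ ∈ 𝒦, κ ⊆ (⋃ γ ∈ G, γ) →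
      ∀ f ∈ FB ℱ B, ∃ g : Set S → (S → X),
        (∀ γ ∈ G, g γ ∈ FB ℱ B ∧ SupportedBy 𝒦 (g γ) γ) ∧
        (∀ J : Finset (Set S), J ⊆ G → (∑ γ ∈ J, g γ) ∈ FB ℱ B) ∧
        ∀ s ∈ κ, f s = ∑ γ ∈ G, g γ s

/-- `f` and `g` are `ℰ`-separated. -/
def ESeparated {S : Type u} {X : Type v} [Zero X]
    (𝒦 𝒢 : Set (Set S)) (f g : S → X) : Prop :=
  ∃ E₁ ∈ genField 𝒦 𝒢, ∃ E₂ ∈ genField 𝒦 𝒢, Disjoint E₁ E₂ ∧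
    SupportedBy 𝒦 f E₁ ∧ SupportedBy 𝒦 g E₂

/-- `ℓ` is `ℰ`-additive. -/
def EAdditive {S : Type u} {X : Type v} {Z : Type w} [AddCommMonoid X] [AddCommMonoid Z]
    (𝒦 𝒢 : Set (Set S)) (ℱ : Set (S → X)) (ℓ : (S → X) → Z) : Prop :=
  ∀ f ∈ ℱ, ∀ g ∈ ℱ, ESeparated 𝒦 𝒢 f g → ℓ (f + g) = ℓ f + ℓ g

/-- `ℓ` is `s`-bounded over `ℬ`. -/
def SBounded {S : Type u} {X : Type v} {Z : Type w} [AddCommMonoid X]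
    [AddCommMonoid Z] [UniformSpace Z]
    (𝒦 𝒢 : Set (Set S)) (ℬ : Set (Set X)) (ℱ : Set (S → X)) (ℓ : (S → X) → Z) : Prop :=
  ∀ B ∈ ℬ, ∀ W : Set (Z × Z), IsUnifEnt Z W → ∀ G : ℕ → Set S, (∀ n, G n ∈ 𝒢) →
    (∀ m n : ℕ, m ≠ n → Disjoint (G m) (G n)) → ∃ m : ℕ, ∀ n > m,
      ∀ f ∈ FB ℱ B, ∀ g ∈ FB ℱ B, SupportedBy 𝒦 g (G n) → (ℓ f, ℓ (f + g)) ∈ W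

/-- `ℓ` is uniformly continuous on `A` with respect to the uniformity `𝒯`. -/
def UContOn {S : Type u} {X : Type v} {Z : Type w} [UniformSpace Z]
    (𝒯 : Filter ((S → X) × (S → X))) (A : Set (S → X)) (ℓ : (S → X) → Z) : Prop :=
  ∀ W ∈ uniformity Z, ∃ T ∈ 𝒯, ∀ f ∈ A, ∀ g ∈ A, (f, g) ∈ T → (ℓ f, ℓ g) ∈ W

/-- A relatively complete subset of a uniform space. -/
def RelComplete {Z : Type w} [UniformSpace Z] (A : Set Z) : Prop :=
  IsComplete (closure A)

/-- `ℓ` is a Riesz integral over the Riesz system `(S,(𝒦,𝒢),(X,ℬ),(ℱ,𝒯))`. -/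
def RieszIntegral {S : Type u} {X : Type v} {Z : Type w} [AddCommMonoid X]
    [AddCommMonoid Z] [UniformSpace Z]
    (𝒦 𝒢 : Set (Set S)) (ℬ : Set (Set X)) (ℱ : Set (S → X))
    (𝒯 : Filter ((S → X) × (S → X))) (ℓ : (S → X) → Z) : Prop :=
  EAdditive 𝒦 𝒢 ℱ ℓ ∧ SBounded 𝒦 𝒢 ℬ ℱ ℓ ∧
    ∀ B ∈ ℬ, UContOn 𝒯 (FB ℱ B) ℓ ∧ RelComplete (ℓ '' FB ℱ B)

/-- The members of a finite family of sets are pairwise disjoint. -/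
def PairwiseDisjFinset {S : Type u} (K : Finset (Set S)) : Prop :=
  ∀ κ₁ ∈ K, ∀ κ₂ ∈ K, κ₁ ≠ κ₂ → Disjoint κ₁ κ₂

/-- `α` is `W`-small with respect to `(h, B)`. -/
def WSmall {S : Type u} {X : Type v} {Z : Type w} [AddCommMonoid X] [AddCommMonoid Z]
    (𝒦 𝒢 : Set (Set S)) (h : Set S → X → Z) (B : Set X)
    (W : Set (Z × Z)) (α : Set S) : Prop :=
  ∃ γ ∈ 𝒢, α ⊆ γ ∧ ∀ K : Finset (Set S), ↑K ⊆ 𝒦 → PairwiseDisjFinset K →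
    (∀ κ ∈ K, κ ⊆ γ) → ∀ x y : Set S → X, (∀ κ ∈ K, x κ ∈ B) → (∀ κ ∈ K, y κ ∈ B) →
      (∑ κ ∈ K, h κ (x κ), ∑ κ ∈ K, h κ (x κ + y κ)) ∈ W

/-- `α` is regular with respect to `(h, 𝒦, 𝒢, ℬ)`. -/
def RegularSet {S : Type u} {X : Type v} {Z : Type w} [AddCommMonoid X]
    [AddCommMonoid Z] [UniformSpace Z]
    (𝒦 𝒢 : Set (Set S)) (ℬ : Set (Set X)) (h : Set S → X → Z) (α : Set S) : Prop :=
  ∀ B ∈ ℬ, ∀ V : Set (Z × Z), IsUnifEnt Z V →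
    ∃ κ ∈ 𝒦, ∃ γ ∈ 𝒢, κ ⊆ α ∧ α ⊆ γ ∧ WSmall 𝒦 𝒢 h B V (γ \ κ)

/-- `R_h`: the family of regular sets of `h`. -/
def RSet {S : Type u} {X : Type v} {Z : Type w} [AddCommMonoid X]
    [AddCommMonoid Z] [UniformSpace Z]
    (𝒦 𝒢 : Set (Set S)) (ℬ : Set (Set X)) (h : Set S → X → Z) : Set (Set S) :=
  {α | RegularSet 𝒦 𝒢 ℬ h α}

/-- `h` is uniformly partition continuous with respect to `(𝒦,𝒢,ℬ)`. -/
def UPartCont {S : Type u} {X : Type v} {Z : Type w} [AddCommMonoid X] [UniformSpace X]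
    [AddCommMonoid Z] [UniformSpace Z]
    (𝒦 𝒢 : Set (Set S)) (ℬ : Set (Set X)) (h : Set S → X → Z) : Prop :=
  ∀ W : Set (Z × Z), IsUnifEnt Z W → ∀ B ∈ ℬ, ∃ U ∈ uniformity X,
    ∀ R : Finset (Set S), ↑R ⊆ RSet 𝒦 𝒢 ℬ h → PairwiseDisjFinset R →
    ∀ x y : Set S → X, (∀ ρ ∈ R, x ρ ∈ B ∧ y ρ ∈ B ∧ (x ρ, y ρ) ∈ U) →
      (∑ ρ ∈ R, h ρ (x ρ), ∑ ρ ∈ R, h ρ (y ρ)) ∈ W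

/-- `h` is `s`-bounded with respect to `(𝒦,𝒢,ℬ)`. -/
def MSBounded {S : Type u} {X : Type v} {Z : Type w} [AddCommMonoid X]
    [AddCommMonoid Z] [UniformSpace Z]
    (𝒦 𝒢 : Set (Set S)) (ℬ : Set (Set X)) (h : Set S → X → Z) : Prop :=
  ∀ B ∈ ℬ, ∀ α : ℕ → Set S, (∀ n, α n ∈ RSet 𝒦 𝒢 ℬ h) →
    (∀ m n : ℕ, m ≠ n → Disjoint (α m) (α n)) → ∀ V : Set (Z × Z), IsUnifEnt Z V →
      ∃ m : ℕ, ∀ n > m, WSmall 𝒦 𝒢 h B V (α n)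

/-- `𝒱(h,𝒦,𝒢,B)`: all finite sums `∑_{ρ∈R} x_ρ.h(ρ)`. -/
def VSums {S : Type u} {X : Type v} {Z : Type w} [AddCommMonoid X]
    [AddCommMonoid Z] [UniformSpace Z]
    (𝒦 𝒢 : Set (Set S)) (ℬ : Set (Set X)) (h : Set S → X → Z) (B : Set X) : Set Z :=
  {z | ∃ R : Finset (Set S), ↑R ⊆ RSet 𝒦 𝒢 ℬ h ∧ PairwiseDisjFinset R ∧
    ∃ x : Set S → X, (∀ ρ ∈ R, x ρ ∈ B) ∧ z = ∑ ρ ∈ R, h ρ (x ρ)}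

/-- `z` is the limit of the net `(F κ x : κ ∈ 𝒦, κ ⊆ γ)` directed by inclusion. -/
def KBelowLim {S : Type u} {X : Type v} {Z : Type w} [TopologicalSpace Z]
    (𝒦 : Set (Set S)) (γ : Set S) (F : Set S → X → Z) (x : X) (z : Z) : Prop :=
  Tendsto (fun κ : {κ : Set S // κ ∈ 𝒦 ∧ κ ⊆ γ} => F κ.1 x) atTop (nhds z)

/-- `z` is the limit of the net `(F γ' x : γ' ∈ 𝒢, α ⊆ γ')` directed by reverse inclusion. -/
def GAboveLim {S : Type u} {X : Type v} {Z : Type w} [TopologicalSpace Z]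
    (𝒢 : Set (Set S)) (α : Set S) (F : Set S → X → Z) (x : X) (z : Z) : Prop :=
  Tendsto (fun γ : {γ : Set S // γ ∈ 𝒢 ∧ α ⊆ γ} => F γ.1 x) atBot (nhds z)

/-- `h` is a Riesz measure over `(𝒦,𝒢,ℬ)`. -/
def RieszMeasure {S : Type u} {X : Type v} {Z : Type w} [AddCommMonoid X] [UniformSpace X]
    [AddCommMonoid Z] [UniformSpace Z]
    (𝒦 𝒢 : Set (Set S)) (ℬ : Set (Set X)) (h : Set S → X → Z) : Prop :=
  𝒢 ⊆ RSet 𝒦 𝒢 ℬ h ∧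
  IsSetField (RSet 𝒦 𝒢 ℬ h) ∧
  (∀ ρ₁ ∈ RSet 𝒦 𝒢 ℬ h, ∀ ρ₂ ∈ RSet 𝒦 𝒢 ℬ h, Disjoint ρ₁ ρ₂ →
      ∀ x : X, h (ρ₁ ∪ ρ₂) x = h ρ₁ x + h ρ₂ x) ∧
  (∀ γ ∈ 𝒢, ∀ x : X, KBelowLim 𝒦 γ h x (h γ x)) ∧
  (∀ α : Set S, ∀ x : X, GAboveLim 𝒢 α h x (h α x)) ∧
  UPartCont 𝒦 𝒢 ℬ h ∧ MSBounded 𝒦 𝒢 ℬ h ∧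
  ∀ B ∈ ℬ, RelComplete (VSums 𝒦 𝒢 ℬ h B)

/-- The finite disjoint family `R` refines `Q`. -/
def RefinesF {S : Type u} (R Q : Finset (Set S)) : Prop :=
  ∀ ρ ∈ R, ∃ q ∈ Q, ρ ⊆ q

/-- `R` is a finite disjoint partition of `E` by sets regular for `h`. -/
def IsPartitionOf {S : Type u} {X : Type v} {Z : Type w} [AddCommMonoid X]
    [AddCommMonoid Z] [UniformSpace Z]
    (𝒦 𝒢 : Set (Set S)) (ℬ : Set (Set X)) (h : Set S → X → Z)
    (R : Finset (Set S)) (E : Set S) : Prop :=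
  ↑R ⊆ RSet 𝒦 𝒢 ℬ h ∧ PairwiseDisjFinset R ∧ (⋃ ρ ∈ R, ρ) = E

/-- `z = ∫_E f.dμ`. -/
def IsIntegralOf {S : Type u} {X : Type v} {Z : Type w} [AddCommMonoid X]
    [AddCommMonoid Z] [UniformSpace Z]
    (𝒦 𝒢 : Set (Set S)) (ℬ : Set (Set X)) (μ : Set S → X → Z)
    (E : Set S) (f : S → X) (z : Z) : Prop :=
  ∀ V ∈ nhds z, ∃ Q : Finset (Set S), IsPartitionOf 𝒦 𝒢 ℬ μ Q E ∧
    ∀ R : Finset (Set S), IsPartitionOf 𝒦 𝒢 ℬ μ R E → RefinesF R Q →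
      ∀ s : Set S → S, (∀ ρ ∈ R, s ρ ∈ ρ) → (∑ ρ ∈ R, μ ρ (f (s ρ))) ∈ V

/-- `ℱ*(x,κ,γ,B)`. -/
def FStar {S : Type u} {X : Type v} [Zero X]
    (𝒦 𝒢 : Set (Set S)) (ℱ : Set (S → X)) (x : X) (κ γ : Set S) (B : Set X) :
    Set (S → X) :=
  {f | f ∈ FB ℱ B ∧ EqualsOver 𝒢 f x κ ∧ SupportedBy 𝒦 f γ}

/-- `τ` is the set function `τ_ℓ` generated by `ℓ` on `𝒦`. -/
def IsTau {S : Type u} {X : Type v} {Z : Type w} [AddCommMonoid X] [UniformSpace Z]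
    (𝒦 𝒢 : Set (Set S)) (ℬ : Set (Set X)) (ℱ : Set (S → X))
    (ℓ : (S → X) → Z) (τ : Set S → X → Z) : Prop :=
  ∀ κ ∈ 𝒦, ∀ x : X, ∀ V ∈ nhds (τ κ x), ∃ β ∈ 𝒢, κ ⊆ β ∧
    ℓ '' FStar 𝒦 𝒢 ℱ x κ β (BHull ℬ x) ⊆ V

/-- `ξ = ξ_ℓ` is the pointwise limit of `τ = τ_ℓ` over `𝒦⁻(γ)`. -/
def IsXi {S : Type u} {X : Type v} {Z : Type w} [TopologicalSpace Z]
    (𝒦 𝒢 : Set (Set S)) (τ ξ : Set S → X → Z) : Prop :=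
  ∀ γ ∈ 𝒢, ∀ x : X, KBelowLim 𝒦 γ τ x (ξ γ x)

/-- `ν = ν_ℓ` is the pointwise limit of `ξ = ξ_ℓ` over `𝒢⁺(α)`. -/
def IsNu {S : Type u} {X : Type v} {Z : Type w} [TopologicalSpace Z]
    (𝒢 : Set (Set S)) (ξ ν : Set S → X → Z) : Prop :=
  ∀ α : Set S, ∀ x : X, GAboveLim 𝒢 α ξ x (ν α x)

/-- `S(W,B,ℓ)`. -/
def SWB {S : Type u} {X : Type v} {Z : Type w} [AddCommMonoid X]
    (𝒦 𝒢 : Set (Set S)) (ℱ : Set (S → X)) (ℓ : (S → X) → Z)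
    (W : Set (Z × Z)) (B : Set X) : Set (Set S) :=
  {γ | γ ∈ 𝒢 ∧ ∀ f ∈ FB ℱ B, ∀ g ∈ FB ℱ B, SupportedBy 𝒦 g γ → (ℓ f, ℓ (f + g)) ∈ W}

/-- `ℓ` has the Hammerstein property relative to `ℰ`. -/
def Hammerstein {S : Type u} {X : Type v} {Z : Type w} [AddCommMonoid X] [AddCommMonoid Z]
    (𝒦 𝒢 : Set (Set S)) (ℱ : Set (S → X)) (ℓ : (S → X) → Z) : Prop :=
  ∀ f ∈ ℱ, ∀ g₁ ∈ ℱ, ∀ g₂ ∈ ℱ, ESeparated 𝒦 𝒢 g₁ g₂ →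
    ℓ (f + g₁ + g₂) + ℓ f = ℓ (f + g₁) + ℓ (f + g₂)

/-- `ℓ` is quasi-additive. -/
def QuasiAdditive {S : Type u} {X : Type v} {Z : Type w} [AddCommMonoid X]
    [AddCommMonoid Z] [UniformSpace Z]
    (ℬ : Set (Set X)) (ℱ : Set (S → X)) (ℓ : (S → X) → Z) : Prop :=
  ∀ W : Set (Z × Z), IsUnifEnt Z W → ∀ B ∈ ℬ, ∃ V : Set (Z × Z), IsUnifEnt Z V ∧
    ∀ f ∈ FB ℱ B, ∀ g ∈ FB ℱ B, ((0 : Z), ℓ g) ∈ V → (ℓ f, ℓ (f + g)) ∈ W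

/-- A perfect subset of `Z`: any function whose finite partial sums all lie in the set
is summable. -/
def PerfectSet {Z : Type w} [AddCommMonoid Z] [TopologicalSpace Z] (A : Set Z) : Prop :=
  ∀ ⦃ι : Type w⦄ (g : ι → Z), (∀ J : Finset ι, ∑ i ∈ J, g i ∈ A) → Summable g

/-- A quasi-perfect subset of `Z`: any function whose finite partial sums all lie in the
set has a Cauchy net of finite partial sums. -/
def QuasiPerfectSet {Z : Type w} [AddCommMonoid Z] [UniformSpace Z] (A : Set Z) : Prop :=
  ∀ ⦃ι : Type w⦄ (g : ι → Z), (∀ J : Finset ι, ∑ i ∈ J, g i ∈ A) →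
    Cauchy (Filter.map (fun J : Finset ι => ∑ i ∈ J, g i) Filter.atTop)

/-- `α` is `U`-small with respect to `(ℓ, B)`. -/
def USmallOp {S : Type u}{X : Type v} {Z : Type w} [AddCommMonoid X] [Zero X]
    (𝒦 : Set (Set S)) (ℱ : Set (S → X)) (ℓ : (S → X) → Z) (B : Set X)
    (U : Set (Z × Z)) (α : Set S) : Prop :=
  ∀ f ∈ FB ℱ B, ∀ g ∈ FB ℱ B, SupportedBy 𝒦 g α → (ℓ f, ℓ (f + g)) ∈ U

/-- `ℓ` is `𝒢`-bounded. -/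
def GBounded {S : Type u} {X : Type v} {Z : Type w} [AddCommMonoid X]
    [AddCommMonoid Z] [UniformSpace Z]
    (𝒦 𝒢 : Set (Set S)) (ℬ : Set (Set X)) (ℱ : Set (S → X)) (ℓ : (S → X) → Z) : Prop :=
  ∀ U : Set (Z × Z), IsUnifEnt Z U → ∀ B ∈ ℬ, ∀ K ∈ 𝒦, ∀ 𝒢' ⊆ 𝒢, K ⊆ ⋃₀ 𝒢' →
    ∃ H : Finset (Set S), ↑H ⊆ 𝒢' ∧ USmallOp 𝒦 ℱ ℓ B U (K \ ⋃ γ ∈ H, γ)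

/-- `ℬ₀` (Notation 2.2). -/
def B0 {X : Type v} [AddCommMonoid X] (ℬ : Set (Set X)) : Set (Set X) :=
  ⋂₀ {ℋ | ℋ ⊆ ℬ ∧ (∀ 𝒞 ⊆ ℋ, 𝒞.Nonempty → ⋂₀ 𝒞 ∈ ℋ) ∧ ⋂₀ ℋ = {0} ∧
      (∀ x : X, BHull ℬ x ∈ ℋ) ∧ ∀ H₁ ∈ ℋ, ∀ H₂ ∈ ℋ, BHullS ℬ (H₁ + H₂) ∈ ℋ}

/-- `ℱ₀` (Notation 2.2). -/
def F0 {S : Type u} {X : Type v} [AddCommMonoid X]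
    (ℬ : Set (Set X)) (ℱ : Set (S → X)) : Set (S → X) :=
  {f | f ∈ ℱ ∧ ∃ B ∈ B0 ℬ, Set.range f ⊆ B}

/-- The uniformity of uniform convergence on `S`, as a filter on `(S → X) × (S → X)`. -/
def UnifConvFilter (S : Type u) (X : Type v) [UniformSpace X] :
    Filter ((S → X) × (S → X)) :=
  ⨅ V ∈ uniformity X, Filter.principal {p : (S → X) × (S → X) | ∀ s : S, (p.1 s, p.2 s) ∈ V}

/-- The additional conditions of Remark 2.5.1 on a Riesz system. -/
structure Remark251 {S : Type u} {X : Type v} [TopologicalSpace S]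
    [AddCommGroup X] [Module ℝ X] [UniformSpace X]
    (𝒦 𝒢 : Set (Set S)) (ℬ : Set (Set X)) (ℱ : Set (S → X))
    (𝒯 : Filter ((S → X) × (S → X))) : Prop where
  K_closed : ∀ κ ∈ 𝒦, IsClosed κ
  G_open : ∀ γ ∈ 𝒢, IsOpen γ
  B_def : ℬ = {B : Set X | IsClosed B ∧ TotallyBounded B}
  F_sub : ∀ f ∈ ℱ, Continuous f ∧ TotallyBounded (Set.range f)
  F_module : ∀ φ : S → ℝ, Continuous φ → TotallyBounded (Set.range φ) →
      ∀ f ∈ ℱ, (fun s => φ s • f s) ∈ ℱ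
  F_tensor : ∀ x : X, ∀ φ : S → ℝ, Continuous φ → TotallyBounded (Set.range φ) →
      (∃ κ ∈ 𝒦, ∀ s ∉ κ, φ s = 0) → (fun s => φ s • x) ∈ ℱ
  T_coarser : UnifConvFilter S X ≤ 𝒯

/-- `A` is a bounded subset of the "topological vector space" `(ℱ,𝒯)`:
it is absorbed by every `𝒯`-neighbourhood of `0`. -/
def FBddIn {S : Type u} {X : Type v} [AddCommGroup X] [Module ℝ X]
    (𝒯 : Filter ((S → X) × (S → X))) (A : Set (S → X)) : Prop :=
  ∀ T ∈ 𝒯, ∃ r : ℝ, 0 < r ∧ ∀ f ∈ A, ∀ c : ℝ, |c| ≤ r → ((0 : S → X), c • f) ∈ T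

/-! By `s`-boundedness, for every entourage `W` some `β ∈ 𝒢` containing `κ` makes `β \ κ`
`W`-small: adding any `g ∈ ℱ_B` supported by `β \ κ` moves `ℓ` by at most `W`. Otherwise one
could split off, again and again, non-small members of `𝒢` from ever smaller neighbourhoods of
`κ`, producing a disjoint sequence that contradicts `s`-boundedness. Two members `f, g` of
`ℱ*(x,κ,β,B)` agree near `κ`, so the extension axiom yields `p, q` supported by `β \ κ` with
`f + p` and `g + q` close in `𝒯`; uniform continuity of `ℓ` then gives
`ℓ f ≈ ℓ (f + p) ≈ ℓ (g + q) ≈ ℓ g`. -/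

lemma exists_isUnifEnt_subset {Z : Type w} [AddCommMonoid Z] [UniformSpace Z]
    (hZadd : UniformContinuous fun p : Z × Z => p.1 + p.2)
    {U : Set (Z × Z)} (hU : U ∈ uniformity Z) :
    ∃ W : Set (Z × Z), IsUnifEnt Z W ∧ W ⊆ U := by
  have : ContinuousAdd Z := ⟨hZadd.continuous⟩
  obtain ⟨C, ⟨hCmem, hCclosed⟩, hCU⟩ := uniformity_hasBasis_closed.mem_iff.1 hU
  let C' : Set (Z × Z) := C ∩ Prod.swap ⁻¹' C
  have hC'mem : C' ∈ uniformity Z := inter_mem hCmem (tendsto_swap_uniformity hCmem)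
  let W : Set (Z × Z) := ⋂ t : Z, (fun p : Z × Z => (p.1 + t, p.2 + t)) ⁻¹' C'
  refine ⟨W, ⟨?_, ?_, ?_, ?_⟩, ?_⟩
  · obtain ⟨u, hu, hu'⟩ :=
      mem_uniformity_of_uniformContinuous_invariant (f := (· + ·)) hZadd hC'mem
    exact mem_of_superset hu fun p hp => mem_iInter.2 fun t => hu' p.1 p.2 t hp
  · exact isClosed_iInter fun t =>
      (hCclosed.inter (hCclosed.preimage continuous_swap)).preimage (by fun_prop)
  · intro p hp t
    refine mem_iInter.2 fun s => ?_
    simpa only [mem_preimage, add_assoc] using mem_iInter.1 hp (t + s)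
  · intro p hp
    exact mem_iInter.2 fun t => (mem_iInter.1 hp t).symm
  · intro p hp
    simpa only [add_zero] using hCU (mem_iInter.1 hp 0).1

open Function in
theorem exists_pairwise_disjoint_of_forall_exists_split {S : Type u} {P Q : Set S → Prop}
    {β₀ : Set S} (h₀ : P β₀)
    (hstep : ∀ β, P β → ∃ β', P β' ∧ β' ⊆ β ∧ ∃ γ, Q γ ∧ γ ⊆ β ∧ Disjoint γ β') :
    ∃ G : ℕ → Set S, (∀ n, Q (G n)) ∧ Pairwise (Disjoint on G) := by
  choose! next hPnext hnext γ hQγ hγ hdisj using hstep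
  let seq : ℕ → Set S := fun n => next^[n] β₀
  have hseq_succ (n : ℕ) : seq (n + 1) = next (seq n) := Function.iterate_succ_apply' ..
  have hPseq (n : ℕ) : P (seq n) := by
    induction n with
    | zero => exact h₀
    | succ n ih => rw [hseq_succ]; exact hPnext _ ih
  have hanti : Antitone seq :=
    antitone_nat_of_succ_le fun n => (hseq_succ n).trans_le (hnext _ (hPseq n))
  refine ⟨fun n => γ (seq n), fun n => hQγ _ (hPseq n), (pairwise_disjoint_on _).2 ?_⟩
  intro m n hmn
  have hγn : γ (seq n) ⊆ next (seq m) := (hγ _ (hPseq n)).trans (hseq_succ m ▸ hanti hmn)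
  exact (hdisj _ (hPseq m)).mono_right hγn

section
variable {S : Type u} {X : Type v} {Z : Type w}

theorem SupportedBy.mono [Zero X] {𝒦 : Set (Set S)} {f : S → X} {α α' : Set S}
    (hf : SupportedBy 𝒦 f α) (hαα' : α ⊆ α') : SupportedBy 𝒦 f α' :=
  let ⟨κ, hκ, hκα, hfκ⟩ := hf
  ⟨κ, hκ, hκα.trans hαα', hfκ⟩

theorem USmallOp.anti [AddCommMonoid X] {𝒦 : Set (Set S)} {ℱ : Set (S → X)}
    {ℓ : (S → X) → Z} {B : Set X} {U : Set (Z × Z)} {α α' : Set S}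
    (h : USmallOp 𝒦 ℱ ℓ B U α') (hαα' : α ⊆ α') : USmallOp 𝒦 ℱ ℓ B U α :=
  fun f hf g hg hgα => h f hf g hg (hgα.mono hαα')

variable [AddCommMonoid X] [UniformSpace X] {𝒦 𝒢 : Set (Set S)} {ℬ : Set (Set X)}
  {ℱ : Set (S → X)} {𝒯 : Filter ((S → X) × (S → X))}

namespace RieszSystem

theorem univ_mem (hRS : RieszSystem 𝒦 𝒢 ℬ ℱ 𝒯) : Set.univ ∈ 𝒢 := by
  obtain ⟨G, hG, hcover, -⟩ := hRS.F_partble 0 hRS.F_zero univ Filter.univ_mem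
  rw [← hcover, ← Finset.sup_set_eq_biUnion]
  exact Finset.sup_mem 𝒢 hRS.G_empty hRS.G_union G id fun γ hγ => hG hγ

theorem add_mem_FB (hRS : RieszSystem 𝒦 𝒢 ℬ ℱ 𝒯) {B B' C : Set X} (hC : B + B' ⊆ C)
    {f g : S → X} (hf : f ∈ FB ℱ B) (hg : g ∈ FB ℱ B') : f + g ∈ FB ℱ C := by
  refine ⟨hRS.F_add f hf.1 g hg.1, ?_⟩
  rintro - ⟨s, rfl⟩
  exact hC (Set.add_mem_add (hf.2 ⟨s, rfl⟩) (hg.2 ⟨s, rfl⟩))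

/-- Interposing `κg ⊆ γ ⊆ κ' ⊆ β \ κ` around the support `κg` of a witness of non-smallness
splits `β` into the non-small `γ` and the smaller neighbourhood `β \ κ'` of `κ`. -/
theorem exists_disjoint_not_usmall (hRS : RieszSystem 𝒦 𝒢 ℬ ℱ 𝒯) {ℓ : (S → X) → Z}
    {B : Set X} {W : Set (Z × Z)} {κ β : Set S} (hκ : κ ∈ 𝒦) (hβ : β ∈ 𝒢) (hκβ : κ ⊆ β)
    (hbad : ¬ USmallOp 𝒦 ℱ ℓ B W (β \ κ)) :
    ∃ β' ∈ 𝒢, κ ⊆ β' ∧ β' ⊆ β ∧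
      ∃ γ ∈ 𝒢, ¬ USmallOp 𝒦 ℱ ℓ B W γ ∧ γ ⊆ β ∧ Disjoint γ β' := by
  simp only [USmallOp, not_forall] at hbad
  obtain ⟨f, hf, g, hg, ⟨κg, hκg, hκgβ, hgκg⟩, hfg⟩ := hbad
  obtain ⟨γ, hγ, κ', hκ', hκgγ, hγκ', hκ'β⟩ :=
    hRS.KG_interpose κg hκg (β \ κ) (hRS.KG_diff κ hκ β hβ).2 hκgβ
  refine ⟨β \ κ', (hRS.KG_diff κ' hκ' β hβ).2, fun s hs => ⟨hκβ hs, fun hs' => (hκ'β hs').2 hs⟩,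
    sdiff_subset, γ, hγ, fun hsmall => hfg (hsmall f hf g hg ⟨κg, hκg, hκgγ, hgκg⟩),
    fun s hs => (hκ'β (hγκ' hs)).1, ?_⟩
  exact Set.disjoint_left.2 fun s hs hs' => hs'.2 (hγκ' hs)

theorem exists_extensions_of_mem_FStar (hRS : RieszSystem 𝒦 𝒢 ℬ ℱ 𝒯) {B : Set X} (hB : B ∈ ℬ)
    {T : Set ((S → X) × (S → X))} (hT : T ∈ 𝒯) {x : X} {κ β : Set S} (hκ : κ ∈ 𝒦)
    (hβ : β ∈ 𝒢) (hκβ : κ ⊆ β) {f g : S → X} (hf : f ∈ FStar 𝒦 𝒢 ℱ x κ β B)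
    (hg : g ∈ FStar 𝒦 𝒢 ℱ x κ β B) :
    ∃ p ∈ FB ℱ B, ∃ q ∈ FB ℱ B, SupportedBy 𝒦 p (β \ κ) ∧ SupportedBy 𝒦 q (β \ κ) ∧
      (f + p, g + q) ∈ T := by
  obtain ⟨hfB, ⟨γf, hγf, hκγf, hfx⟩, hfβ⟩ := hf
  obtain ⟨hgB, ⟨γg, hγg, hκγg, hgx⟩, hgβ⟩ := hg
  obtain ⟨U, hU, hext⟩ := hRS.F_ext B hB T hT
  -- `f` and `g` both equal `x` on `γf ∩ γg ∩ β ⊇ κ`, so any entourage `U` will do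
  refine hext κ hκ β hβ hκβ f hfB g hgB hfβ hgβ
    ⟨γf ∩ γg ∩ β, hRS.G_inter _ (hRS.G_inter _ hγf _ hγg) _ hβ,
      fun s hs => ⟨⟨hκγf hs, hκγg hs⟩, hκβ hs⟩, inter_subset_right, fun s hs => ?_⟩
  rw [hfx s hs.1.1, hgx s hs.1.2]
  exact refl_mem_uniformity hU

end RieszSystem

theorem SBounded.exists_usmall_diff [AddCommMonoid Z] [UniformSpace Z] {ℓ : (S → X) → Z}
    (hs : SBounded 𝒦 𝒢 ℬ ℱ ℓ) (hRS : RieszSystem 𝒦 𝒢 ℬ ℱ 𝒯) {κ : Set S} (hκ : κ ∈ 𝒦)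
    {B : Set X} (hB : B ∈ ℬ) {W : Set (Z × Z)} (hW : IsUnifEnt Z W) :
    ∃ β ∈ 𝒢, κ ⊆ β ∧ USmallOp 𝒦 ℱ ℓ B W (β \ κ) := by
  by_contra! hbad
  obtain ⟨G, hGbad, hGdisj⟩ :=
    exists_pairwise_disjoint_of_forall_exists_split
      (P := fun β => β ∈ 𝒢 ∧ κ ⊆ β) (Q := fun γ => γ ∈ 𝒢 ∧ ¬ USmallOp 𝒦 ℱ ℓ B W γ)
      ⟨hRS.univ_mem, subset_univ κ⟩ fun β ⟨hβ, hκβ⟩ => by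
        obtain ⟨β', hβ', hκβ', hβ'β, γ, hγ, hγbad, hγβ, hγβ'⟩ :=
          hRS.exists_disjoint_not_usmall hκ hβ hκβ (hbad β hβ hκβ)
        exact ⟨β', ⟨hβ', hκβ'⟩, hβ'β, γ, ⟨hγ, hγbad⟩, hγβ, hγβ'⟩
  obtain ⟨m, hm⟩ := hs B hB W hW G (fun n => (hGbad n).1) hGdisj
  exact (hGbad (m + 1)).2 (hm (m + 1) m.lt_succ_self)

end

theorem stmt14_general {S : Type u} {X : Type v} {Z : Type w}
    [AddCommMonoid X] [UniformSpace X]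
    [AddCommMonoid Z] [UniformSpace Z]
    (hZadd : UniformContinuous fun p : Z × Z => p.1 + p.2)
    {𝒦 𝒢 : Set (Set S)} {ℬ : Set (Set X)} {ℱ : Set (S → X)}
    {𝒯 : Filter ((S → X) × (S → X))}
    (hRS : RieszSystem 𝒦 𝒢 ℬ ℱ 𝒯)
    (ℓ : (S → X) → Z) (hℓ : RieszIntegral 𝒦 𝒢 ℬ ℱ 𝒯 ℓ) :
    ∀ κ ∈ 𝒦, ∀ B ∈ ℬ, ∀ x ∈ B, ∀ U ∈ uniformity Z, ∃ β ∈ 𝒢, κ ⊆ β ∧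
      (ℓ '' FStar 𝒦 𝒢 ℱ x κ β B) ×ˢ (ℓ '' FStar 𝒦 𝒢 ℱ x κ β B) ⊆ U := by
  intro κ hκ B hB x _ U hU
  obtain ⟨t, ht, htU⟩ := comp3_mem_uniformity hU
  obtain ⟨W, hW, hWt⟩ := exists_isUnifEnt_subset hZadd ht
  obtain ⟨C, hC, hBBC⟩ := hRS.B_add B hB B hB
  obtain ⟨T, hT, hℓT⟩ := (hℓ.2.2 C hC).1 t ht
  obtain ⟨β, hβ, hκβ, hsmall⟩ := hℓ.2.1.exists_usmall_diff hRS hκ hB hW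
  refine ⟨β, hβ, hκβ, ?_⟩
  rintro ⟨-, -⟩ ⟨⟨f, hf, rfl⟩, ⟨g, hg, rfl⟩⟩
  obtain ⟨p, hp, q, hq, hpβ, hqβ, hpq⟩ :=
    hRS.exists_extensions_of_mem_FStar hB hT hκ hβ hκβ hf hg
  have hfp : (ℓ f, ℓ (f + p)) ∈ t := hWt (hsmall f hf.1 p hp hpβ)
  have hpq : (ℓ (f + p), ℓ (g + q)) ∈ t :=
    hℓT _ (hRS.add_mem_FB hBBC hf.1 hp) _ (hRS.add_mem_FB hBBC hg.1 hq) hpq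
  have hqg : (ℓ (g + q), ℓ g) ∈ t := hWt (hW.2.2.2 _ (hsmall g hg.1 q hq hqβ))
  exact htU ⟨_, hfp, _, hpq, hqg⟩

theorem stmt14 {S : Type u} {X : Type v} {Z : Type w}
    [AddCommMonoid X] [UniformSpace X] [T2Space X]
    [AddCommMonoid Z] [UniformSpace Z] [T2Space Z]
    (hZadd : UniformContinuous fun p : Z × Z => p.1 + p.2)
    {𝒦 𝒢 : Set (Set S)} {ℬ : Set (Set X)} {ℱ : Set (S → X)}
    {𝒯 : Filter ((S → X) × (S → X))}
    (hRS : RieszSystem 𝒦 𝒢 ℬ ℱ 𝒯)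
    (ℓ : (S → X) → Z) (hℓ : RieszIntegral 𝒦 𝒢 ℬ ℱ 𝒯 ℓ) :
    ∀ κ ∈ 𝒦, ∀ B ∈ ℬ, ∀ x ∈ B, ∀ U ∈ uniformity Z, ∃ β ∈ 𝒢, κ ⊆ β ∧
      (ℓ '' FStar 𝒦 𝒢 ℱ x κ β B) ×ˢ (ℓ '' FStar 𝒦 𝒢 ℱ x κ β B) ⊆ U :=
  stmt14_general hZadd hRS ℓ hℓ
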